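/- Let Φ be an N×m real matrix whose columns are discretely divergence-free, M Φ = 0, and let a : ℝ → ℝ^m be differentiable with derivative a'(t), p : ℝ → ℝ^P. Suppose a satisfies the projected (Galerkin) momentum equation a'(t) = Φᵀ ( −C̃(Φ a(t)) Φ a(t) + ν D Φ a(t) − G p(t) ) for all t. Then the ROM kinetic energy K_r(t) := ½ ‖a(t)‖² (Euclidean norm) satisfies, at every t, d/dt K_r(t) = −ν ‖Q Φ a(t)‖². In particular the ROM is nonlinearly stable for ν ≥ 0 — the ROM kinetic energy is nonincreasing — independent of the number of modes m, and for ν = 0 it is exactly conserved. -/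

import Mathlib

open Matrix

/-!
Pairing the Galerkin equation with `a` gives `K_r' = a' ⬝ a = r ⬝ (Φ a)` for the full-order
residual `r = −C̃(Φa) Φa + ν D Φa − G p`. The convection term drops out because `C̃(Φa)` is
skew-symmetric, the pressure term because `(Mᵀ p) ⬝ Φa = p ⬝ (M Φ) a = 0`, and the diffusion term
equals `−ν ‖Q Φ a‖²` since `D = −QᵀQ`.
-/

theorem HasDerivAt.dotProduct {ι : Type*} [Fintype ι] {f g : ℝ → ι → ℝ} {f' g' : ι → ℝ}
    {t : ℝ} (hf : HasDerivAt f f' t) (hg : HasDerivAt g g' t) :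
    HasDerivAt (fun s => f s ⬝ᵥ g s) (f' ⬝ᵥ g t + f t ⬝ᵥ g') t := by
  have hterm : ∀ i ∈ Finset.univ, HasDerivAt (fun s => f s i * g s i)
      (f' i * g t i + f t i * g' i) t := fun i _ =>
    (hasDerivAt_pi.mp hf i).mul (hasDerivAt_pi.mp hg i)
  have hsum : HasDerivAt (fun s => ∑ i, f s i * g s i)
      (∑ i, (f' i * g t i + f t i * g' i)) t := HasDerivAt.fun_sum hterm
  rwa [Finset.sum_add_distrib] at hsum

theorem HasDerivAt.half_dotProduct_self {ι : Type*} [Fintype ι] {f : ℝ → ι → ℝ}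
    {f' : ι → ℝ} {t : ℝ} (hf : HasDerivAt f f' t) :
    HasDerivAt (fun s => (1 / 2) * (f s ⬝ᵥ f s)) (f' ⬝ᵥ f t) t := by
  have hprod := (hf.dotProduct hf).const_mul (1 / 2 : ℝ)
  rwa [dotProduct_comm (f t) f', ← two_mul, ← mul_assoc, one_div_mul_cancel two_ne_zero,
    one_mul] at hprod

namespace Matrix

variable {m n : Type*} [Fintype m] [Fintype n]

theorem transpose_mulVec_dotProduct (A : Matrix m n ℝ) (w : m → ℝ) (x : n → ℝ) :
    (Aᵀ *ᵥ w) ⬝ᵥ x = w ⬝ᵥ (A *ᵥ x) := by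
  rw [mulVec_transpose, ← dotProduct_mulVec]

theorem mulVec_dotProduct_self_eq_zero_of_transpose_eq_neg {A : Matrix n n ℝ}
    (hA : Aᵀ = -A) (u : n → ℝ) : (A *ᵥ u) ⬝ᵥ u = 0 := by
  have hflip : (A *ᵥ u) ⬝ᵥ u = -((A *ᵥ u) ⬝ᵥ u) := by
    conv_lhs => rw [dotProduct_comm, ← transpose_mulVec_dotProduct, hA]
    rw [neg_mulVec, neg_dotProduct]
  linarith

theorem neg_transpose_mul_self_mulVec_dotProduct (Q : Matrix m n ℝ) (u : n → ℝ) :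
    (-(Qᵀ * Q) *ᵥ u) ⬝ᵥ u = -((Q *ᵥ u) ⬝ᵥ (Q *ᵥ u)) := by
  rw [neg_mulVec, neg_dotProduct, ← mulVec_mulVec, transpose_mulVec_dotProduct]

theorem neg_transpose_mulVec_dotProduct_mulVec_eq_zero {k : Type*} [Fintype k]
    {M : Matrix m n ℝ} {Φ : Matrix n k ℝ} (hΦ : M * Φ = 0) (p : m → ℝ) (a : k → ℝ) :
    (-Mᵀ *ᵥ p) ⬝ᵥ (Φ *ᵥ a) = 0 := by
  rw [neg_mulVec, neg_dotProduct, transpose_mulVec_dotProduct, mulVec_mulVec, hΦ,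
    zero_mulVec, dotProduct_zero, neg_zero]

end Matrix

theorem rom_energy_equation_general
    (N P NQ m : ℕ)
    (M : Matrix (Fin P) (Fin N) ℝ) (G : Matrix (Fin N) (Fin P) ℝ) (hG : G = -Mᵀ)
    (C : (Fin N → ℝ) → Matrix (Fin N) (Fin N) ℝ)
    (hC : ∀ w : Fin N → ℝ, (C w)ᵀ = -(C w))
    (Q : Matrix (Fin NQ) (Fin N) ℝ) (D : Matrix (Fin N) (Fin N) ℝ)
    (hD : D = -(Qᵀ * Q))
    (ν : ℝ)
    (Φ : Matrix (Fin N) (Fin m) ℝ) (hΦ : M * Φ = 0)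
    (a : ℝ → Fin m → ℝ) (p : ℝ → Fin P → ℝ)
    (ha : ∀ t, HasDerivAt a
      (Φᵀ *ᵥ (-(C (Φ *ᵥ a t) *ᵥ (Φ *ᵥ a t)) + ν • (D *ᵥ (Φ *ᵥ a t)) - G *ᵥ p t)) t) :
    ∀ t, HasDerivAt (fun s => (1/2) * (a s ⬝ᵥ a s))
      (-ν * ((Q *ᵥ (Φ *ᵥ a t)) ⬝ᵥ (Q *ᵥ (Φ *ᵥ a t)))) t := by
  intro t
  set u := Φ *ᵥ a t
  have hconv : (C u *ᵥ u) ⬝ᵥ u = 0 :=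
    mulVec_dotProduct_self_eq_zero_of_transpose_eq_neg (hC u) u
  have hdiff : (D *ᵥ u) ⬝ᵥ u = -((Q *ᵥ u) ⬝ᵥ (Q *ᵥ u)) := by
    rw [hD, neg_transpose_mul_self_mulVec_dotProduct]
  have hpres : (G *ᵥ p t) ⬝ᵥ u = 0 := by
    rw [hG, neg_transpose_mulVec_dotProduct_mulVec_eq_zero hΦ]
  convert (ha t).half_dotProduct_self using 1
  rw [transpose_mulVec_dotProduct, sub_dotProduct, add_dotProduct, neg_dotProduct,
    smul_dotProduct, hconv, hdiff, hpres, smul_eq_mul]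
  ring

/-- Energy conservation / stability of the velocity-only ROM: with a
divergence-free basis (`M Φ = 0`), skew-symmetric convection, `D = −QᵀQ`,
`G = −Mᵀ`, the ROM kinetic energy `K_r = ½ ‖a‖²` satisfies
`dK_r/dt = −ν ‖Q Φ a‖²`, independent of the number of modes `m`. -/
theorem rom_energy_equation
    (N P NQ m : ℕ)
    (M : Matrix (Fin P) (Fin N) ℝ) (G : Matrix (Fin N) (Fin P) ℝ) (hG : G = -Mᵀ)
    (C : (Fin N → ℝ) → Matrix (Fin N) (Fin N) ℝ)
    (hC : ∀ w : Fin N → ℝ, (C w)ᵀ = -(C w))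
    (Q : Matrix (Fin NQ) (Fin N) ℝ) (D : Matrix (Fin N) (Fin N) ℝ)
    (hD : D = -(Qᵀ * Q))
    (ν : ℝ) (hν : 0 ≤ ν)
    (Φ : Matrix (Fin N) (Fin m) ℝ) (hΦ : M * Φ = 0)
    (a : ℝ → Fin m → ℝ) (p : ℝ → Fin P → ℝ)
    (ha : ∀ t, HasDerivAt a
      (Φᵀ *ᵥ (-(C (Φ *ᵥ a t) *ᵥ (Φ *ᵥ a t)) + ν • (D *ᵥ (Φ *ᵥ a t)) - G *ᵥ p t)) t) :
    ∀ t, HasDerivAt (fun s => (1/2) * (a s ⬝ᵥ a s))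
      (-ν * ((Q *ᵥ (Φ *ᵥ a t)) ⬝ᵥ (Q *ᵥ (Φ *ᵥ a t)))) t :=
  rom_energy_equation_general N P NQ m M G hG C hC Q D hD ν Φ hΦ a p ha
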